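/- For a nonzero generalized Euclidean distance matrix D, the all-ones vector 1 lies in both the column space of D and the column space of D'. -/

import Mathlib

/-!
Write `s = ∑ vᵢ`, `t = ∑ vᵢ lᵢᵢ` and `τ = tr L > 0`. If `vᵀ D = 0`, pairing with `1` (and using
`L 1 = 0`) gives `n a² t + b² τ s = 0`, while pairing with `v` gives `(a² + b²) t s = 2ab vᵀ L v ≥ 0`.
Multiplying the first identity by `s`, both of its terms are nonnegative, so `b² τ s² = 0` and
`s = 0`. Thus `1` is orthogonal to the left kernel of `D`, i.e. lies in its column space; the same
applies to `Dᵀ`, which is the GEDM of `L` with `a` and `b` swapped.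
-/

open Matrix

theorem Matrix.exists_mulVec_eq_of_forall_vecMul_eq_zero {m n : Type*} [Fintype m] [Fintype n]
    (M : Matrix m n ℝ) (y : m → ℝ) (h : ∀ v, v ᵥ* M = 0 → v ⬝ᵥ y = 0) :
    ∃ u, M *ᵥ u = y := by
  classical
  set A := M.toEuclideanLin
  have hy : WithLp.toLp 2 y ∈ A.range := by
    rw [← A.adjoint_adjoint, ← LinearMap.orthogonal_ker, Submodule.mem_orthogonal']
    intro w hw
    rw [LinearMap.mem_ker, ← toEuclideanLin_conjTranspose_eq_adjoint] at hw
    have hwM : WithLp.ofLp w ᵥ* M = 0 := by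
      simpa [conjTranspose_eq_transpose_of_trivial, mulVec_transpose] using congrArg WithLp.ofLp hw
    simpa [EuclideanSpace.inner_eq_star_dotProduct, dotProduct_comm] using h _ hwM
  obtain ⟨u, hu⟩ := hy
  exact ⟨WithLp.ofLp u, congrArg WithLp.ofLp hu⟩

variable {n : Type*}

def gedm (a b : ℝ) (L : Matrix n n ℝ) : Matrix n n ℝ :=
  of fun i j => a ^ 2 * L i i + b ^ 2 * L j j - 2 * a * b * L i j

theorem transpose_gedm (a b : ℝ) (L : Matrix n n ℝ) : (gedm a b L)ᵀ = gedm b a Lᵀ := by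
  ext i j
  simp only [gedm, transpose_apply, of_apply]
  ring

variable [Fintype n]

theorem vecMul_gedm (a b : ℝ) (L : Matrix n n ℝ) (v : n → ℝ) :
    v ᵥ* gedm a b L =
      (a ^ 2 * (v ⬝ᵥ L.diag)) • 1 + (b ^ 2 * (v ⬝ᵥ 1)) • L.diag - (2 * a * b) • (v ᵥ* L) := by
  ext j
  simp only [vecMul, dotProduct, gedm, of_apply, diag_apply, Pi.add_apply, Pi.sub_apply,
    Pi.smul_apply, Pi.one_apply, smul_eq_mul, Finset.mul_sum, Finset.sum_mul,
    ← Finset.sum_add_distrib, ← Finset.sum_sub_distrib]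
  exact Finset.sum_congr rfl fun i _ => by ring

theorem dotProduct_one_eq_zero_of_vecMul_gedm_eq_zero {a b : ℝ} (ha : 0 < a) (hb : 0 < b)
    {L : Matrix n n ℝ} (hL : L.PosSemidef) (hL1 : L *ᵥ 1 = 0) (hL0 : L ≠ 0) {v : n → ℝ}
    (hv : v ᵥ* gedm a b L = 0) : v ⬝ᵥ 1 = 0 := by
  have htr : 0 < L.diag ⬝ᵥ 1 := by
    rw [dotProduct_one]
    exact hL.trace_nonneg.lt_of_ne fun h => hL0 (hL.trace_eq_zero_iff.mp h.symm)
  have hq : 0 ≤ v ⬝ᵥ (L *ᵥ v) := by simpa using hL.dotProduct_mulVec_nonneg v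
  have hsum := congrArg (· ⬝ᵥ 1) hv
  have hquad := congrArg (· ⬝ᵥ v) hv
  simp only [vecMul_gedm, add_dotProduct, sub_dotProduct, smul_dotProduct, ← dotProduct_mulVec,
    hL1, dotProduct_zero, zero_dotProduct, one_dotProduct_one, smul_eq_mul, mul_zero, sub_zero,
    dotProduct_comm 1 v, dotProduct_comm L.diag v] at hsum hquad
  generalize v ⬝ᵥ 1 = s at hsum hquad ⊢
  generalize v ⬝ᵥ L.diag = t at hsum hquad
  have hts : 0 ≤ t * s := by
    refine nonneg_of_mul_nonneg_right (a := a ^ 2 + b ^ 2) ?_ (by positivity)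
    rw [show (a ^ 2 + b ^ 2) * (t * s) = 2 * a * b * (v ⬝ᵥ (L *ᵥ v)) by linear_combination hquad]
    exact mul_nonneg (by positivity) hq
  have hs2 : b ^ 2 * (L.diag ⬝ᵥ 1) * s ^ 2 = -(a ^ 2 * Fintype.card n * (t * s)) := by
    linear_combination s * hsum
  have hs2_nonpos : s ^ 2 ≤ 0 := by
    refine nonpos_of_mul_nonpos_right (a := b ^ 2 * (L.diag ⬝ᵥ 1)) ?_ (by positivity)
    rw [hs2, neg_nonpos]
    exact mul_nonneg (by positivity) hts
  exact (sq_nonpos_iff s).mp hs2_nonpos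

theorem exists_mulVec_gedm_eq_one {a b : ℝ} (ha : 0 < a) (hb : 0 < b) {L : Matrix n n ℝ}
    (hL : L.PosSemidef) (hL1 : L *ᵥ 1 = 0) (hL0 : L ≠ 0) : ∃ u, gedm a b L *ᵥ u = 1 :=
  exists_mulVec_eq_of_forall_vecMul_eq_zero _ _ fun _ hv =>
    dotProduct_one_eq_zero_of_vecMul_gedm_eq_zero ha hb hL hL1 hL0 hv

/-- For a nonzero GEDM `D`, the all-ones vector lies in the column space of `D`
and in the column space of `Dᵀ`. -/
theorem stmt8 (n : ℕ) (L D : Matrix (Fin n) (Fin n) ℝ) (hL : L.PosSemidef)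
    (hL1 : L *ᵥ (fun _ => (1 : ℝ)) = 0) (hL0 : L ≠ 0)
    (a b : ℝ) (ha : 0 < a) (hb : 0 < b)
    (hD : ∀ i j, D i j = a ^ 2 * L i i + b ^ 2 * L j j - 2 * a * b * L i j) :
    (∃ u : Fin n → ℝ, D *ᵥ u = fun _ => (1 : ℝ)) ∧
    (∃ v : Fin n → ℝ, Dᵀ *ᵥ v = fun _ => (1 : ℝ)) := by
  have hDL : D = gedm a b L := ext hD
  have hLT : Lᵀ = L := by simpa [conjTranspose_eq_transpose_of_trivial] using hL.isHermitian.eq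
  rw [hDL, transpose_gedm, hLT]
  exact ⟨exists_mulVec_gedm_eq_one ha hb hL hL1 hL0, exists_mulVec_gedm_eq_one hb ha hL hL1 hL0⟩
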